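/- For i.i.d. centered X_1,...,X_n with finite fourth moment and bootstrap samples of size m ≥ 2, the expected conditional variance of the bootstrap sample variance is E_L[Var_U(v̂(L_U))] = ((n−1)/(n m(m−1)))·[(3m − 3 + ((n² − 2n + 3)/n²)(6 − 4m))·μ₂² + (m − 1 + ((n−1)/n²)(6 − 4m))·μ₄]. -/

import Mathlib

/-!
Conditionally on the data `y`, the bootstrap draws `y (U 1), …, y (U m)` are i.i.d. from the
empirical distribution of `y`, and the sample variance does not change when `y` is recentred.
For a centred i.i.d. sample of size `m` with moments `σ₂, σ₄`, the sample variance `s²` has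
`Var s² = σ₄ / m - (m - 3) / (m (m - 1)) · σ₂²`; with `σ₂, σ₄` the empirical central moments of
the data this is `Var_U`. Averaging over the data then needs the expectations of those empirical
moments, i.e. mixed moments of the power sums `∑ Yᵢ, ∑ Yᵢ², ∑ Yᵢ³, ∑ Yᵢ⁴` of a centred
independent sample. Each is computed by singling out one summand `Y j` and expanding binomially
against the independent remainder `∑_{i ≠ j} Y i`; the same computation proves the formula for
`Var s²`.
-/

open MeasureTheory ProbabilityTheory

/-- The uniform probability measure on the `n^m` sampling-with-replacement maps
`{1,…,m} → {1,…,n}`. -/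
noncomputable def unif (n m : ℕ) [NeZero n] : Measure (Fin m → Fin n) :=
  (PMF.uniformOfFintype (Fin m → Fin n)).toMeasure

/-- The unbiased sample variance of the bootstrap sample `L_U` of size `m`. -/
noncomputable def vhatBoot {Ω : Type*} (n m : ℕ) (X : Fin n → Ω → ℝ)
    (ω : Ω) (u : Fin m → Fin n) : ℝ :=
  ((m : ℝ) - 1)⁻¹ * ∑ j, (X (u j) ω - (m : ℝ)⁻¹ * ∑ k, X (u k) ω) ^ 2

open Finset

section Empirical

variable {ι : Type*} [Fintype ι]

noncomputable def empiricalMean (z : ι → ℝ) : ℝ := (Fintype.card ι : ℝ)⁻¹ * ∑ i, z i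

noncomputable def sampleVariance (z : ι → ℝ) : ℝ :=
  ((Fintype.card ι : ℝ) - 1)⁻¹ * ∑ i, (z i - empiricalMean z) ^ 2

noncomputable def empiricalCentralMoment (z : ι → ℝ) (k : ℕ) : ℝ :=
  (Fintype.card ι : ℝ)⁻¹ * ∑ i, (z i - empiricalMean z) ^ k

lemma sampleVariance_sub_const (z : ι → ℝ) (c : ℝ) :
    sampleVariance (fun i => z i - c) = sampleVariance z := by
  rcases isEmpty_or_nonempty ι with hι | hι
  · simp [sampleVariance]
  have hN : (Fintype.card ι : ℝ) ≠ 0 := Nat.cast_ne_zero.2 Fintype.card_ne_zero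
  simp only [sampleVariance, empiricalMean, sum_sub_distrib, sum_const, card_univ, nsmul_eq_mul]
  congr 1
  refine sum_congr rfl fun i _ => ?_
  field_simp
  ring

lemma empiricalMean_sub_empiricalMean (z : ι → ℝ) :
    empiricalMean (fun i => z i - empiricalMean z) = 0 := by
  rcases isEmpty_or_nonempty ι with hι | hι
  · simp [empiricalMean]
  have hN : (Fintype.card ι : ℝ) ≠ 0 := Nat.cast_ne_zero.2 Fintype.card_ne_zero
  simp only [empiricalMean, sum_sub_distrib, sum_const, card_univ, nsmul_eq_mul]
  field_simp
  ring

lemma sum_sub_empiricalMean_sq (z : ι → ℝ) :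
    ∑ i, (z i - empiricalMean z) ^ 2 = ∑ i, z i ^ 2 - (∑ i, z i) ^ 2 / Fintype.card ι := by
  rcases isEmpty_or_nonempty ι with hι | hι
  · simp
  have hN : (Fintype.card ι : ℝ) ≠ 0 := Nat.cast_ne_zero.2 Fintype.card_ne_zero
  have expand : ∀ i, (z i - empiricalMean z) ^ 2
      = z i ^ 2 - 2 * empiricalMean z * z i + empiricalMean z ^ 2 := fun i => by ring
  simp only [expand, sum_add_distrib, sum_sub_distrib, ← mul_sum, sum_const, card_univ,
    nsmul_eq_mul]
  simp only [empiricalMean]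
  field_simp
  ring

lemma sum_sub_empiricalMean_pow_four (z : ι → ℝ) :
    ∑ i, (z i - empiricalMean z) ^ 4
      = ∑ i, z i ^ 4 - 4 * (∑ i, z i ^ 3) * (∑ i, z i) / Fintype.card ι
        + 6 * (∑ i, z i ^ 2) * (∑ i, z i) ^ 2 / (Fintype.card ι) ^ 2
        - 3 * (∑ i, z i) ^ 4 / (Fintype.card ι) ^ 3 := by
  rcases isEmpty_or_nonempty ι with hι | hι
  · simp
  have hN : (Fintype.card ι : ℝ) ≠ 0 := Nat.cast_ne_zero.2 Fintype.card_ne_zero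
  have expand : ∀ i, (z i - empiricalMean z) ^ 4
      = z i ^ 4 - 4 * empiricalMean z * z i ^ 3 + 6 * empiricalMean z ^ 2 * z i ^ 2
        - 4 * empiricalMean z ^ 3 * z i + empiricalMean z ^ 4 := fun i => by ring
  simp only [expand, sum_add_distrib, sum_sub_distrib, ← mul_sum, sum_const, card_univ,
    nsmul_eq_mul]
  simp only [empiricalMean]
  field_simp
  ring

end Empirical

lemma pow_mul_add_pow_eq_sum (x r : ℝ) (p q : ℕ) :
    x ^ p * (x + r) ^ q = ∑ k ∈ range (q + 1), x ^ (p + k) * r ^ (q - k) * (q.choose k) := by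
  rw [add_pow, mul_sum]
  exact sum_congr rfl fun k _ => by ring

lemma Finset.sum_pow_mul_sum_pow_eq {ι : Type*} [DecidableEq ι] (s : Finset ι) (z : ι → ℝ)
    (p q : ℕ) :
    (∑ j ∈ s, z j ^ p) * (∑ j ∈ s, z j) ^ q
      = ∑ j ∈ s, z j ^ p * (z j + ∑ i ∈ s.erase j, z i) ^ q := by
  rw [sum_mul]
  exact sum_congr rfl fun j hj => by rw [add_sum_erase s z hj]

section Moments

variable {Ω : Type*} [MeasurableSpace Ω] {μ : Measure Ω}

theorem MeasureTheory.MemLp.integrable_pow_of_le [IsFiniteMeasure μ] {X : Ω → ℝ} {n k : ℕ}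
    (hX : MemLp X n μ) (hk : k ≤ n) : Integrable (fun ω => X ω ^ k) μ := by
  refine ((hX.mono_exponent (by exact_mod_cast hk)).integrable_norm_pow').mono'
    (hX.1.pow k) (ae_of_all _ fun ω => ?_)
  simp [norm_pow]

theorem MeasureTheory.MemLp.sq_of_four {X : Ω → ℝ} (hX : MemLp X 4 μ) :
    MemLp (fun ω => X ω ^ 2) 2 μ := by
  convert hX.norm_rpow_div 2 using 1
  · ext ω
    simp
  · exact (ENNReal.eq_div_iff two_ne_zero ENNReal.ofNat_ne_top).2 (by norm_num)

namespace ProbabilityTheory.IndepFun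

variable [IsProbabilityMeasure μ] {X R : Ω → ℝ} {p q : ℕ}

lemma integrable_pow_mul_pow (h : IndepFun X R μ) (hX : MemLp X (p + q : ℕ) μ)
    (hR : MemLp R q μ) {k : ℕ} (hk : k ≤ q) :
    Integrable (fun ω => X ω ^ (p + k) * R ω ^ (q - k)) μ :=
  (h.comp (measurable_id.pow_const (p + k)) (measurable_id.pow_const (q - k))).integrable_mul
    (hX.integrable_pow_of_le (by omega)) (hR.integrable_pow_of_le (by omega))

lemma integrable_pow_mul_add_pow (h : IndepFun X R μ) (hX : MemLp X (p + q : ℕ) μ)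
    (hR : MemLp R q μ) : Integrable (fun ω => X ω ^ p * (X ω + R ω) ^ q) μ := by
  simp_rw [pow_mul_add_pow_eq_sum]
  exact integrable_finsetSum _ fun k hk =>
    (h.integrable_pow_mul_pow hX hR (Nat.lt_succ_iff.1 (mem_range.1 hk))).mul_const _

lemma integral_pow_mul_add_pow (h : IndepFun X R μ) (hX : MemLp X (p + q : ℕ) μ)
    (hR : MemLp R q μ) :
    ∫ ω, X ω ^ p * (X ω + R ω) ^ q ∂μ
      = ∑ k ∈ range (q + 1), (∫ ω, X ω ^ (p + k) ∂μ) * (∫ ω, R ω ^ (q - k) ∂μ) * q.choose k := by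
  simp_rw [pow_mul_add_pow_eq_sum]
  rw [integral_finsetSum _ fun k hk =>
    (h.integrable_pow_mul_pow hX hR (Nat.lt_succ_iff.1 (mem_range.1 hk))).mul_const _]
  refine sum_congr rfl fun k _ => ?_
  rw [integral_mul_const]
  congr 1
  exact (h.comp (measurable_id.pow_const (p + k)) (measurable_id.pow_const (q - k))
    ).integral_fun_mul_eq_mul_integral (hX.1.pow _) (hR.1.pow _)

end ProbabilityTheory.IndepFun

namespace ProbabilityTheory.iIndepFun

variable {ι : Type*} [DecidableEq ι] {Z : ι → Ω → ℝ}

lemma indepFun_sum_erase (hZ : iIndepFun Z μ) (hmeas : ∀ i, Measurable (Z i)) (s : Finset ι)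
    (j : ι) : IndepFun (Z j) (fun ω => ∑ i ∈ s.erase j, Z i ω) μ := by
  simpa only [Finset.sum_fn] using (hZ.indepFun_finsetSum_of_notMem hmeas (notMem_erase j s)).symm

variable [IsProbabilityMeasure μ] {p q : ℕ}

lemma integrable_sum_pow_mul_sum_pow (hZ : iIndepFun Z μ) (hmeas : ∀ i, Measurable (Z i))
    (hL : ∀ i, MemLp (Z i) (p + q : ℕ) μ) (s : Finset ι) :
    Integrable (fun ω => (∑ j ∈ s, Z j ω ^ p) * (∑ j ∈ s, Z j ω) ^ q) μ := by
  have hR : ∀ j, MemLp (fun ω => ∑ i ∈ s.erase j, Z i ω) q μ := fun j =>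
    memLp_finsetSum _ fun i _ => (hL i).mono_exponent (by exact_mod_cast Nat.le_add_left q p)
  simp_rw [sum_pow_mul_sum_pow_eq]
  exact integrable_finsetSum _ fun j _ =>
    (hZ.indepFun_sum_erase hmeas s j).integrable_pow_mul_add_pow (hL j) (hR j)

lemma integral_sum_pow_mul_sum_pow (hZ : iIndepFun Z μ) (hmeas : ∀ i, Measurable (Z i))
    (hL : ∀ i, MemLp (Z i) (p + q : ℕ) μ) (s : Finset ι) :
    ∫ ω, (∑ j ∈ s, Z j ω ^ p) * (∑ j ∈ s, Z j ω) ^ q ∂μ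
      = ∑ j ∈ s, ∑ k ∈ range (q + 1), (∫ ω, Z j ω ^ (p + k) ∂μ)
          * (∫ ω, (∑ i ∈ s.erase j, Z i ω) ^ (q - k) ∂μ) * q.choose k := by
  have hR : ∀ j, MemLp (fun ω => ∑ i ∈ s.erase j, Z i ω) q μ := fun j =>
    memLp_finsetSum _ fun i _ => (hL i).mono_exponent (by exact_mod_cast Nat.le_add_left q p)
  simp_rw [sum_pow_mul_sum_pow_eq]
  rw [integral_finsetSum _ fun j _ =>
    (hZ.indepFun_sum_erase hmeas s j).integrable_pow_mul_add_pow (hL j) (hR j)]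
  exact sum_congr rfl fun j _ =>
    (hZ.indepFun_sum_erase hmeas s j).integral_pow_mul_add_pow (hL j) (hR j)

end ProbabilityTheory.iIndepFun

structure IsIndepCentered {ι : Type*} (Y : ι → Ω → ℝ) (μ : Measure Ω) (σ₂ σ₄ : ℝ) : Prop where
  measurable : ∀ i, Measurable (Y i)
  indep : iIndepFun Y μ
  memLp_four : ∀ i, MemLp (Y i) 4 μ
  integral_eq_zero : ∀ i, ∫ ω, Y i ω ∂μ = 0
  integral_sq : ∀ i, ∫ ω, Y i ω ^ 2 ∂μ = σ₂
  integral_pow_four : ∀ i, ∫ ω, Y i ω ^ 4 ∂μ = σ₄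

namespace IsIndepCentered

variable {ι : Type*} {Y : ι → Ω → ℝ} {σ₂ σ₄ : ℝ}

lemma of_map_eq {X : ι → Ω → ℝ} (hmeas : ∀ i, Measurable (X i)) (hindep : iIndepFun X μ)
    (hL4 : ∀ i, MemLp (X i) 4 μ) {ν : Measure ℝ} (hid : ∀ i, μ.map (X i) = ν) (i₀ : ι)
    (hcentered : ∫ ω, X i₀ ω ∂μ = 0) :
    IsIndepCentered X μ (∫ ω, X i₀ ω ^ 2 ∂μ) (∫ ω, X i₀ ω ^ 4 ∂μ) := by
  have hmoment : ∀ i (k : ℕ), ∫ ω, X i ω ^ k ∂μ = ∫ ω, X i₀ ω ^ k ∂μ := fun i k =>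
    calc ∫ ω, X i ω ^ k ∂μ = ∫ x, x ^ k ∂(μ.map (X i)) :=
          (integral_map (hmeas i).aemeasurable (continuous_pow k).aestronglyMeasurable).symm
      _ = ∫ x, x ^ k ∂(μ.map (X i₀)) := by rw [hid, hid]
      _ = ∫ ω, X i₀ ω ^ k ∂μ :=
          integral_map (hmeas i₀).aemeasurable (continuous_pow k).aestronglyMeasurable
  exact ⟨hmeas, hindep, hL4, fun i => by simpa [hcentered] using hmoment i 1,
    fun i => hmoment i 2, fun i => hmoment i 4⟩

lemma memLp_sum_sq (hY : IsIndepCentered Y μ σ₂ σ₄) (s : Finset ι) :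
    MemLp (fun ω => ∑ i ∈ s, Y i ω ^ 2) 2 μ :=
  memLp_finsetSum _ fun i _ => (hY.memLp_four i).sq_of_four

lemma memLp_sq_sum (hY : IsIndepCentered Y μ σ₂ σ₄) (s : Finset ι) :
    MemLp (fun ω => (∑ i ∈ s, Y i ω) ^ 2) 2 μ :=
  (memLp_finsetSum _ fun i _ => hY.memLp_four i).sq_of_four

lemma integrable_sq_sum_sq (hY : IsIndepCentered Y μ σ₂ σ₄) (s : Finset ι) :
    Integrable (fun ω => (∑ i ∈ s, Y i ω ^ 2) ^ 2) μ :=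
  (hY.memLp_sum_sq s).integrable_sq

lemma integrable_sum_sq_mul_sq_sum (hY : IsIndepCentered Y μ σ₂ σ₄) (s : Finset ι) :
    Integrable (fun ω => (∑ i ∈ s, Y i ω ^ 2) * (∑ i ∈ s, Y i ω) ^ 2) μ :=
  (hY.memLp_sum_sq s).integrable_mul (hY.memLp_sq_sum s)

lemma integrable_pow_four_sum (hY : IsIndepCentered Y μ σ₂ σ₄) (s : Finset ι) :
    Integrable (fun ω => (∑ i ∈ s, Y i ω) ^ 4) μ := by
  simpa [← pow_mul] using (hY.memLp_sq_sum s).integrable_sq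

lemma memLp_sum_sub_empiricalMean_sq [Fintype ι] (hY : IsIndepCentered Y μ σ₂ σ₄) :
    MemLp (fun ω => ∑ i, (Y i ω - empiricalMean (Y · ω)) ^ 2) 2 μ := by
  simp_rw [sum_sub_empiricalMean_sq, div_eq_mul_inv]
  exact (hY.memLp_sum_sq univ).sub ((hY.memLp_sq_sum univ).mul_const _)

variable [IsProbabilityMeasure μ]

lemma memLp (hY : IsIndepCentered Y μ σ₂ σ₄) {k : ℕ} (hk : k ≤ 4) (i : ι) : MemLp (Y i) k μ :=
  (hY.memLp_four i).mono_exponent (by exact_mod_cast hk)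

lemma integrable_sum_pow_three_mul_sum (hY : IsIndepCentered Y μ σ₂ σ₄) (s : Finset ι) :
    Integrable (fun ω => (∑ i ∈ s, Y i ω ^ 3) * ∑ i ∈ s, Y i ω) μ := by
  classical
  simpa using hY.indep.integrable_sum_pow_mul_sum_pow (p := 3) (q := 1) hY.measurable
    (fun i => hY.memLp le_rfl i) s

lemma integral_sum (hY : IsIndepCentered Y μ σ₂ σ₄) (s : Finset ι) :
    ∫ ω, ∑ i ∈ s, Y i ω ∂μ = 0 := by
  rw [integral_finsetSum _ fun i _ => (hY.memLp_four i).integrable (by norm_num)]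
  simp [hY.integral_eq_zero]

lemma integral_sum_sq (hY : IsIndepCentered Y μ σ₂ σ₄) (s : Finset ι) :
    ∫ ω, ∑ i ∈ s, Y i ω ^ 2 ∂μ = #s * σ₂ := by
  rw [integral_finsetSum _ fun i _ => ((hY.memLp_four i).sq_of_four).integrable (by norm_num)]
  simp [hY.integral_sq]

lemma integral_sum_pow_four (hY : IsIndepCentered Y μ σ₂ σ₄) (s : Finset ι) :
    ∫ ω, ∑ i ∈ s, Y i ω ^ 4 ∂μ = #s * σ₄ := by
  rw [integral_finsetSum _ fun i _ => (hY.memLp_four i).integrable_pow_of_le le_rfl]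
  simp [hY.integral_pow_four]

lemma integral_sq_sum (hY : IsIndepCentered Y μ σ₂ σ₄) (s : Finset ι) :
    ∫ ω, (∑ i ∈ s, Y i ω) ^ 2 ∂μ = #s * σ₂ := by
  classical
  have h := hY.indep.integral_sum_pow_mul_sum_pow (p := 1) (q := 1) hY.measurable
    (fun i => hY.memLp (by norm_num) i) s
  simpa [sum_range_succ, hY.integral_eq_zero, hY.integral_sq, ← sq] using h

lemma integral_pow_four_sum (hY : IsIndepCentered Y μ σ₂ σ₄) (s : Finset ι) :
    ∫ ω, (∑ i ∈ s, Y i ω) ^ 4 ∂μ = #s * σ₄ + 3 * #s * (#s - 1) * σ₂ ^ 2 := by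
  classical
  have h := hY.indep.integral_sum_pow_mul_sum_pow (p := 1) (q := 3) hY.measurable
    (fun i => hY.memLp le_rfl i) s
  simp only [pow_one, ← pow_succ', Nat.reduceAdd, sum_range_succ, range_one, sum_singleton,
    add_zero, hY.integral_eq_zero, tsub_zero, zero_mul, Nat.choose_zero_right, Nat.cast_one,
    mul_one, hY.integral_sq, Nat.add_one_sub_one, hY.integral_sq_sum, Nat.choose_one_right,
    Nat.cast_ofNat, zero_add, Nat.reduceSub, hY.integral_sum, mul_zero, Nat.choose_succ_self_right,
    hY.integral_pow_four, tsub_self, pow_zero, integral_const, probReal_univ, smul_eq_mul,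
    Nat.choose_self] at h
  rw [h, sum_eq_card_nsmul fun j hj => by rw [cast_card_erase_of_mem hj], nsmul_eq_mul]
  ring

lemma integral_sum_sq_mul_sq_sum (hY : IsIndepCentered Y μ σ₂ σ₄) (s : Finset ι) :
    ∫ ω, (∑ i ∈ s, Y i ω ^ 2) * (∑ i ∈ s, Y i ω) ^ 2 ∂μ = #s * σ₄ + #s * (#s - 1) * σ₂ ^ 2 := by
  classical
  have h := hY.indep.integral_sum_pow_mul_sum_pow (p := 2) (q := 2) hY.measurable
    (fun i => hY.memLp le_rfl i) s
  simp only [Nat.reduceAdd, sum_range_succ, range_one, sum_singleton, add_zero, hY.integral_sq,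
    tsub_zero, hY.integral_sq_sum, Nat.choose_zero_right, Nat.cast_one, mul_one,
    Nat.add_one_sub_one, pow_one, hY.integral_sum, mul_zero, Nat.choose_succ_self_right,
    Nat.cast_ofNat, zero_mul, hY.integral_pow_four, tsub_self, pow_zero, integral_const,
    probReal_univ, smul_eq_mul, Nat.choose_self] at h
  rw [h, sum_eq_card_nsmul fun j hj => by rw [cast_card_erase_of_mem hj], nsmul_eq_mul]
  ring

lemma integral_sum_pow_three_mul_sum (hY : IsIndepCentered Y μ σ₂ σ₄) (s : Finset ι) :
    ∫ ω, (∑ i ∈ s, Y i ω ^ 3) * ∑ i ∈ s, Y i ω ∂μ = #s * σ₄ := by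
  classical
  have h := hY.indep.integral_sum_pow_mul_sum_pow (p := 3) (q := 1) hY.measurable
    (fun i => hY.memLp le_rfl i) s
  simpa [sum_range_succ, hY.integral_pow_four, hY.integral_sum] using h

lemma integral_sq_sum_sq (hY : IsIndepCentered Y μ σ₂ σ₄) (s : Finset ι) :
    ∫ ω, (∑ i ∈ s, Y i ω ^ 2) ^ 2 ∂μ = #s * σ₄ + #s * (#s - 1) * σ₂ ^ 2 := by
  classical
  have hsq : iIndepFun (fun i ω => Y i ω ^ 2) μ :=
    hY.indep.comp (fun _ x => x ^ 2) fun _ => measurable_id.pow_const 2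
  have h := hsq.integral_sum_pow_mul_sum_pow (p := 1) (q := 1)
    (fun i => (hY.measurable i).pow_const 2) (fun i => by simpa using (hY.memLp_four i).sq_of_four)
    s
  simp only [pow_one, ← sq, Nat.reduceAdd, ← pow_mul, sum_range_succ, range_one, sum_singleton,
    add_zero, mul_one, hY.integral_sq, tsub_zero, hY.integral_sum_sq, Nat.choose_succ_self_right,
    zero_add, Nat.cast_one, Nat.reducePow, hY.integral_pow_four, tsub_self, pow_zero,
    integral_const, probReal_univ, smul_eq_mul, one_pow, Nat.choose_self] at h
  rw [h, sum_eq_card_nsmul fun j hj => by rw [cast_card_erase_of_mem hj], nsmul_eq_mul]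
  ring

variable [Fintype ι]

lemma integrable_sum_sub_empiricalMean_pow_four (hY : IsIndepCentered Y μ σ₂ σ₄) :
    Integrable (fun ω => ∑ i, (Y i ω - empiricalMean (Y · ω)) ^ 4) μ := by
  have hmean : MemLp (fun ω => empiricalMean (Y · ω)) 4 μ :=
    (memLp_finsetSum _ fun i _ => hY.memLp_four i).const_mul _
  exact integrable_finsetSum _ fun i _ => ((hY.memLp_four i).sub hmean).integrable_pow_of_le le_rfl

variable [Nonempty ι]

lemma integral_sum_sub_empiricalMean_sq (hY : IsIndepCentered Y μ σ₂ σ₄) :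
    ∫ ω, ∑ i, (Y i ω - empiricalMean (Y · ω)) ^ 2 ∂μ = (Fintype.card ι - 1) * σ₂ := by
  have hN : (Fintype.card ι : ℝ) ≠ 0 := Nat.cast_ne_zero.2 Fintype.card_ne_zero
  simp_rw [sum_sub_empiricalMean_sq]
  rw [integral_sub ((hY.memLp_sum_sq univ).integrable (by norm_num))
    (((hY.memLp_sq_sum univ).integrable (by norm_num)).div_const _), integral_div,
    hY.integral_sum_sq, hY.integral_sq_sum, card_univ]
  field_simp

lemma integral_sq_sum_sub_empiricalMean_sq (hY : IsIndepCentered Y μ σ₂ σ₄) :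
    ∫ ω, (∑ i, (Y i ω - empiricalMean (Y · ω)) ^ 2) ^ 2 ∂μ
      = ((Fintype.card ι - 1) ^ 2 * σ₄
          + (Fintype.card ι - 1) * (Fintype.card ι ^ 2 - 2 * Fintype.card ι + 3) * σ₂ ^ 2)
        / Fintype.card ι := by
  set N : ℝ := (Fintype.card ι : ℝ)
  have hN : N ≠ 0 := Nat.cast_ne_zero.2 Fintype.card_ne_zero
  have expand : ∀ ω, (∑ i, (Y i ω - empiricalMean (Y · ω)) ^ 2) ^ 2
      = (∑ i, Y i ω ^ 2) ^ 2 - 2 / N * ((∑ i, Y i ω ^ 2) * (∑ i, Y i ω) ^ 2)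
        + 1 / N ^ 2 * (∑ i, Y i ω) ^ 4 := fun ω => by
    rw [sum_sub_empiricalMean_sq]
    field_simp
    ring
  have h22 := hY.integrable_sq_sum_sq univ
  have h21 := hY.integrable_sum_sq_mul_sq_sum univ
  simp_rw [expand]
  rw [integral_add (h22.sub' (h21.const_mul _)) ((hY.integrable_pow_four_sum univ).const_mul _),
    integral_sub h22 (h21.const_mul _), integral_const_mul, integral_const_mul,
    hY.integral_sq_sum_sq, hY.integral_sum_sq_mul_sq_sum, hY.integral_pow_four_sum, card_univ]
  field_simp
  ring

lemma integral_sum_sub_empiricalMean_pow_four (hY : IsIndepCentered Y μ σ₂ σ₄) :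
    ∫ ω, ∑ i, (Y i ω - empiricalMean (Y · ω)) ^ 4 ∂μ
      = (Fintype.card ι - 1) * ((Fintype.card ι ^ 2 - 3 * Fintype.card ι + 3) * σ₄
          + 3 * (2 * Fintype.card ι - 3) * σ₂ ^ 2) / Fintype.card ι ^ 2 := by
  set N : ℝ := (Fintype.card ι : ℝ)
  have hN : N ≠ 0 := Nat.cast_ne_zero.2 Fintype.card_ne_zero
  have expand : ∀ ω, ∑ i, (Y i ω - empiricalMean (Y · ω)) ^ 4
      = ∑ i, Y i ω ^ 4 - 4 / N * ((∑ i, Y i ω ^ 3) * ∑ i, Y i ω)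
        + 6 / N ^ 2 * ((∑ i, Y i ω ^ 2) * (∑ i, Y i ω) ^ 2) - 3 / N ^ 3 * (∑ i, Y i ω) ^ 4 :=
    fun ω => by rw [sum_sub_empiricalMean_pow_four]; ring
  have h4 : Integrable (fun ω => ∑ i, Y i ω ^ 4) μ :=
    integrable_finsetSum _ fun i _ => (hY.memLp_four i).integrable_pow_of_le le_rfl
  have h31 := hY.integrable_sum_pow_three_mul_sum univ
  have h21 := hY.integrable_sum_sq_mul_sq_sum univ
  simp_rw [expand]
  rw [integral_sub ((h4.sub' (h31.const_mul _)).fun_add (h21.const_mul _))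
      ((hY.integrable_pow_four_sum univ).const_mul _),
    integral_add (h4.sub' (h31.const_mul _)) (h21.const_mul _), integral_sub h4 (h31.const_mul _),
    integral_const_mul, integral_const_mul, integral_const_mul, hY.integral_sum_pow_four,
    hY.integral_sum_pow_three_mul_sum, hY.integral_sum_sq_mul_sq_sum, hY.integral_pow_four_sum,
    card_univ]
  field_simp
  ring

theorem variance_sampleVariance (hY : IsIndepCentered Y μ σ₂ σ₄) (hN : 2 ≤ Fintype.card ι) :
    variance (fun ω => sampleVariance (Y · ω)) μ
      = σ₄ / Fintype.card ι
        - (Fintype.card ι - 3) / (Fintype.card ι * (Fintype.card ι - 1)) * σ₂ ^ 2 := by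
  have hN2 : (2 : ℝ) ≤ Fintype.card ι := by exact_mod_cast hN
  have hN1 : (Fintype.card ι : ℝ) - 1 ≠ 0 := by linarith
  simp only [sampleVariance]
  rw [variance_const_mul, variance_eq_sub hY.memLp_sum_sub_empiricalMean_sq]
  simp only [Pi.pow_apply]
  rw [hY.integral_sq_sum_sub_empiricalMean_sq, hY.integral_sum_sub_empiricalMean_sq]
  field_simp
  ring

end IsIndepCentered

end Moments

section Bootstrap

variable {n m : ℕ}

lemma vhatBoot_eq_sampleVariance {Ω : Type*} (X : Fin n → Ω → ℝ) (ω : Ω) :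
    vhatBoot n m X ω = fun u => sampleVariance fun j => X (u j) ω := by
  ext u
  simp [vhatBoot, sampleVariance, empiricalMean]

variable [NeZero n]

instance isProbabilityMeasure_unif : IsProbabilityMeasure (unif n m) := by
  unfold unif
  infer_instance

lemma unif_eq_pi :
    unif n m = Measure.pi fun _ : Fin m => (PMF.uniformOfFintype (Fin n)).toMeasure := by
  refine Measure.ext_of_singleton fun u => ?_
  rw [unif, PMF.toMeasure_apply_singleton _ _ (measurableSet_singleton u), Measure.pi_singleton]
  simp [ENNReal.inv_pow]

lemma integral_unif_comp_eval (g : Fin n → ℝ) (j : Fin m) :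
    ∫ u, g (u j) ∂unif n m = empiricalMean g := by
  rw [unif_eq_pi, integral_comp_eval Measurable.of_discrete.aestronglyMeasurable,
    PMF.integral_eq_sum]
  simp [empiricalMean, mul_sum]

lemma iIndepFun_unif_comp_eval (g : Fin n → ℝ) :
    iIndepFun (fun j (u : Fin m → Fin n) => g (u j)) (unif n m) := by
  rw [unif_eq_pi]
  exact iIndepFun_pi fun _ => Measurable.of_discrete.aemeasurable

theorem variance_sampleVariance_unif (y : Fin n → ℝ) (hm : 2 ≤ m) :
    variance (fun u : Fin m → Fin n => sampleVariance fun j => y (u j)) (unif n m)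
      = empiricalCentralMoment y 4 / m
        - (m - 3) / (m * (m - 1)) * empiricalCentralMoment y 2 ^ 2 := by
  set z := fun i => y i - empiricalMean y
  have hz : IsIndepCentered (fun j (u : Fin m → Fin n) => z (u j)) (unif n m)
      (empiricalCentralMoment y 2) (empiricalCentralMoment y 4) :=
    { measurable := fun _ => Measurable.of_discrete
      indep := iIndepFun_unif_comp_eval z
      memLp_four := fun _ => MemLp.of_discrete
      integral_eq_zero := fun j => by
        rw [integral_unif_comp_eval]; exact empiricalMean_sub_empiricalMean y
      integral_sq := fun j => integral_unif_comp_eval (fun i => z i ^ 2) j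
      integral_pow_four := fun j => integral_unif_comp_eval (fun i => z i ^ 4) j }
  have : Nonempty (Fin m) := ⟨⟨0, by omega⟩⟩
  have hshift : (fun u : Fin m → Fin n => sampleVariance fun j => y (u j))
      = fun u => sampleVariance fun j => z (u j) :=
    funext fun u => (sampleVariance_sub_const _ _).symm
  rw [hshift]
  simpa using hz.variance_sampleVariance (by simpa using hm)

theorem IsIndepCentered.integral_variance_sampleVariance_unif {Ω : Type*} [MeasurableSpace Ω]
    {μ : Measure Ω} [IsProbabilityMeasure μ] {X : Fin n → Ω → ℝ} {σ₂ σ₄ : ℝ}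
    (hX : IsIndepCentered X μ σ₂ σ₄) (hm : 2 ≤ m) :
    ∫ ω, variance (fun u => sampleVariance fun j => X (u j) ω) (unif n m) ∂μ
      = (((n : ℝ) - 1) / ((n : ℝ) * m * ((m : ℝ) - 1))) *
          ((3 * (m : ℝ) - 3
              + (((n : ℝ) ^ 2 - 2 * n + 3) / (n : ℝ) ^ 2) * (6 - 4 * (m : ℝ))) * σ₂ ^ 2
            + ((m : ℝ) - 1 + (((n : ℝ) - 1) / (n : ℝ) ^ 2) * (6 - 4 * (m : ℝ))) * σ₄) := by
  have hm1 : (m : ℝ) - 1 ≠ 0 := by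
    have : (2 : ℝ) ≤ m := by exact_mod_cast hm
    linarith
  have hn0 : (n : ℝ) ≠ 0 := Nat.cast_ne_zero.2 (NeZero.ne n)
  calc ∫ ω, variance (fun u => sampleVariance fun j => X (u j) ω) (unif n m) ∂μ
      = ∫ ω, ((n : ℝ)⁻¹ * ∑ i, (X i ω - empiricalMean (X · ω)) ^ 4) / m
          - (m - 3) / (m * (m - 1)) * ((n : ℝ)⁻¹ ^ 2
            * (∑ i, (X i ω - empiricalMean (X · ω)) ^ 2) ^ 2) ∂μ := by
        refine integral_congr_ae (ae_of_all _ fun ω => ?_)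
        dsimp only
        rw [variance_sampleVariance_unif (X · ω) hm]
        simp only [empiricalCentralMoment, Fintype.card_fin, mul_pow]
    _ = ((n : ℝ)⁻¹ * ∫ ω, ∑ i, (X i ω - empiricalMean (X · ω)) ^ 4 ∂μ) / m
          - (m - 3) / (m * (m - 1)) * ((n : ℝ)⁻¹ ^ 2
            * ∫ ω, (∑ i, (X i ω - empiricalMean (X · ω)) ^ 2) ^ 2 ∂μ) := by
        rw [integral_sub (hX.integrable_sum_sub_empiricalMean_pow_four.const_mul _ |>.div_const _)
          (hX.memLp_sum_sub_empiricalMean_sq.integrable_sq.const_mul _ |>.const_mul _),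
          integral_div, integral_const_mul, integral_const_mul, integral_const_mul]
    _ = _ := by
        rw [hX.integral_sum_sub_empiricalMean_pow_four, hX.integral_sq_sum_sub_empiricalMean_sq]
        simp only [Fintype.card_fin]
        field_simp
        ring

end Bootstrap

/-- Expected conditional variance of the bootstrap sample variance:
`E_L[Var_U(v̂(L_U))] = ((n−1)/(n·m·(m−1)))·[(3m − 3 + ((n²−2n+3)/n²)(6−4m))·μ₂²
  + (m − 1 + ((n−1)/n²)(6−4m))·μ₄]`. -/
theorem expected_conditional_variance_bootstrap_sample_variance
    {Ω : Type*} [MeasurableSpace Ω] (μ : Measure Ω) [IsProbabilityMeasure μ]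
    (n m : ℕ) [NeZero n] (hm : 2 ≤ m)
    (X : Fin n → Ω → ℝ) (hXmeas : ∀ i, Measurable (X i))
    (hXindep : iIndepFun X μ)
    (ν : Measure ℝ) (hXid : ∀ i, Measure.map (X i) μ = ν)
    (hL4 : ∀ i, MemLp (X i) 4 μ)
    (hcentered : ∫ ω, X ⟨0, Nat.pos_of_ne_zero (NeZero.ne n)⟩ ω ∂μ = 0)
    (μ₂ μ₄ : ℝ)
    (hμ₂ : μ₂ = ∫ ω, (X ⟨0, Nat.pos_of_ne_zero (NeZero.ne n)⟩ ω) ^ 2 ∂μ)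
    (hμ₄ : μ₄ = ∫ ω, (X ⟨0, Nat.pos_of_ne_zero (NeZero.ne n)⟩ ω) ^ 4 ∂μ) :
    ∫ ω, variance (fun u => vhatBoot n m X ω u) (unif n m) ∂μ
      = (((n : ℝ) - 1) / ((n : ℝ) * m * ((m : ℝ) - 1))) *
          ((3 * (m : ℝ) - 3
              + (((n : ℝ) ^ 2 - 2 * n + 3) / (n : ℝ) ^ 2) * (6 - 4 * (m : ℝ))) * μ₂ ^ 2
            + ((m : ℝ) - 1
              + (((n : ℝ) - 1) / (n : ℝ) ^ 2) * (6 - 4 * (m : ℝ))) * μ₄) := by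
  have hX := IsIndepCentered.of_map_eq hXmeas hXindep hL4 hXid _ hcentered
  rw [← hμ₂, ← hμ₄] at hX
  simpa only [vhatBoot_eq_sampleVariance] using hX.integral_variance_sampleVariance_unif hm
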